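/- In the setting of mixed-logit demand with log-normal mixing, η_{jj}(λ p)² / m(λ p_j)² → 1 as λ → ∞ along any ray p ∈ ℝ_{++}^J, where η_{jj}(p) = ∂_{p_j} q_j(p)/q_j(p) and m(x) = −L'(x)/L(x) with L the log-normal Laplace transform. -/

import Mathlib

open MeasureTheory Real Filter

/-- Density of the log-normal distribution with parameters `μ` and `σ` on `(0, ∞)`. -/
noncomputable def lognormalPdf (μ σ : ℝ) (α : ℝ) : ℝ :=
  (1 / (α * σ * Real.sqrt (2 * Real.pi))) * Real.exp (-(Real.log α - μ) ^ 2 / (2 * σ ^ 2))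

/-- Laplace transform of the log-normal distribution. -/
noncomputable def lnLaplace (μ σ : ℝ) (x : ℝ) : ℝ :=
  ∫ α in Set.Ioi (0 : ℝ), Real.exp (-α * x) * lognormalPdf μ σ α

/-- Logit choice probability of product `j` at prices `p`, mean utilities `δ`,
and price coefficient `α`. -/
noncomputable def logitShare {J : ℕ} (δ : Fin J → ℝ) (j : Fin J) (p : Fin J → ℝ) (α : ℝ) : ℝ :=
  Real.exp (δ j - α * p j) / (1 + ∑ l, Real.exp (δ l - α * p l))

/-- Mixed-logit demand for product `j` with log-normal mixing over the price coefficient. -/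
noncomputable def qLN {J : ℕ} (δ : Fin J → ℝ) (M μ σ : ℝ) (j : Fin J) (p : Fin J → ℝ) : ℝ :=
  M * ∫ α in Set.Ioi (0 : ℝ), logitShare δ j p α * lognormalPdf μ σ α

/-- Partial derivative of `F : (Fin J → ℝ) → ℝ` in the `k`-th coordinate at `p`. -/
noncomputable def pd {J : ℕ} (F : (Fin J → ℝ) → ℝ) (k : Fin J) (p : Fin J → ℝ) : ℝ :=
  deriv (fun t => F (Function.update p k t)) (p k)

/-!
Write `f` for the log-normal density and `L_k(x) = ∫₀^∞ α^k e^{-αx} f(α) dα`, so `L = L_0` and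
`-L' = L_1`. As `x → ∞` these integrals concentrate near `α = 0`, where raising `μ` makes `f`
negligible: `f_{μ+t}/f_μ → 0` as `α → 0⁺`. Since `L_k` also decays more slowly than any
exponential, `L_k` computed with `μ + t` is `o(L_k)`; and as `L_k(cx)` is `c^{-k}` times `L_k`
computed with `μ + log c`, we get `L_k(cx) = o(L_k(x))` for every `c > 1`.

On the ray `q = λp`, both the logit share `s` and `s (1 - s)` lie within `2ES` of
`E = e^{δ_j - αλp_j}`, where `S = ∑_l e^{δ_l - αλp_l}`, and `ES` integrates against `α^k f` to a
combination of the `L_k(λ(p_j + p_l)) = o(L_k(λp_j))`. Hence `q_j ~ M e^{δ_j} L(λp_j)` and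
`-∂_{p_j} q_j ~ M e^{δ_j} (-L')(λp_j)`, so that `η_jj(λp) ~ -m(λp_j)`.
-/

open Set Topology Asymptotics

lemma setIntegral_pos_of_pos {X : Type*} [MeasurableSpace X] {μ : Measure X} {s : Set X}
    {f : X → ℝ} (hs : MeasurableSet s) (hμs : 0 < μ s) (hf : IntegrableOn f s μ)
    (hpos : ∀ x ∈ s, 0 < f x) : 0 < ∫ x in s, f x ∂μ := by
  rw [setIntegral_pos_iff_support_of_nonneg_ae
    ((ae_restrict_mem hs).mono fun x hx => (hpos x hx).le) hf]
  exact hμs.trans_le (measure_mono fun x hx => ⟨(hpos x hx).ne', hx⟩)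

section LognormalPdf

variable {μ σ : ℝ}

@[fun_prop]
lemma measurable_lognormalPdf : Measurable (lognormalPdf μ σ) := by
  unfold lognormalPdf; fun_prop

lemma lognormalPdf_pos (hσ : 0 < σ) {α : ℝ} (hα : 0 < α) : 0 < lognormalPdf μ σ α := by
  unfold lognormalPdf
  have : 0 < √(2 * π) := Real.sqrt_pos.2 (by positivity)
  positivity

lemma mul_sub_sq_div_le (hσ : σ ≠ 0) (a u : ℝ) :
    a * u - (u - μ) ^ 2 / (2 * σ ^ 2) ≤ a * μ + a ^ 2 * σ ^ 2 / 2 := by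
  have key : a * μ + a ^ 2 * σ ^ 2 / 2 - (a * u - (u - μ) ^ 2 / (2 * σ ^ 2))
      = (u - (μ + a * σ ^ 2)) ^ 2 / (2 * σ ^ 2) := by
    field_simp; ring
  linarith [show 0 ≤ (u - (μ + a * σ ^ 2)) ^ 2 / (2 * σ ^ 2) by positivity]

lemma pow_mul_lognormalPdf_le_rpow (hσ : 0 < σ) (k : ℕ) (b : ℝ) :
    ∃ C, ∀ α : ℝ, 0 < α → α ^ k * lognormalPdf μ σ α ≤ C * α ^ b := by
  set a : ℝ := k - 1 - b
  refine ⟨(σ * √(2 * π))⁻¹ * rexp (a * μ + a ^ 2 * σ ^ 2 / 2), fun α hα => ?_⟩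
  have hpow : α ^ k * α⁻¹ = rexp (a * Real.log α) * α ^ b := by
    rw [← Real.rpow_natCast, ← Real.rpow_neg_one, ← Real.rpow_add hα, mul_comm a,
      ← Real.rpow_def_of_pos hα, ← Real.rpow_add hα]
    congr 1
    simp only [a]
    ring
  have hpdf : α ^ k * lognormalPdf μ σ α = (σ * √(2 * π))⁻¹ *
      rexp (a * Real.log α - (Real.log α - μ) ^ 2 / (2 * σ ^ 2)) * α ^ b := by
    have : α ^ k * lognormalPdf μ σ α = (σ * √(2 * π))⁻¹ * (α ^ k * α⁻¹) *
        rexp (-(Real.log α - μ) ^ 2 / (2 * σ ^ 2)) := by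
      unfold lognormalPdf
      field_simp
    rw [this, hpow, Real.exp_sub, neg_div, Real.exp_neg]
    ring
  rw [hpdf]
  gcongr
  exact mul_sub_sq_div_le hσ.ne' a _

lemma integrableOn_pow_mul_lognormalPdf (hσ : 0 < σ) (k : ℕ) :
    IntegrableOn (fun α => α ^ k * lognormalPdf μ σ α) (Ioi 0) := by
  have hmeas : Measurable fun α : ℝ => α ^ k * lognormalPdf μ σ α := by fun_prop
  have hnorm : ∀ α : ℝ, 0 < α → ‖α ^ k * lognormalPdf μ σ α‖ = α ^ k * lognormalPdf μ σ α :=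
    fun α hα => Real.norm_of_nonneg (by have := lognormalPdf_pos (μ := μ) hσ hα; positivity)
  have hnear : IntegrableOn (fun α => α ^ k * lognormalPdf μ σ α) (Ioo 0 1) := by
    obtain ⟨C, hC⟩ := pow_mul_lognormalPdf_le_rpow (μ := μ) hσ k (-(1 / 2) : ℝ)
    refine (((intervalIntegral.integrableOn_Ioo_rpow_iff (s := -(1 / 2)) one_pos).2
      (by norm_num)).const_mul C).mono' hmeas.aestronglyMeasurable ?_
    filter_upwards [ae_restrict_mem measurableSet_Ioo] with α hα
    exact (hnorm α hα.1).trans_le (hC α hα.1)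
  have hfar : IntegrableOn (fun α => α ^ k * lognormalPdf μ σ α) (Ici 1) := by
    rw [integrableOn_Ici_iff_integrableOn_Ioi]
    obtain ⟨C, hC⟩ := pow_mul_lognormalPdf_le_rpow (μ := μ) hσ k (-2 : ℝ)
    refine ((integrableOn_Ioi_rpow_of_lt (a := -2) (by norm_num) one_pos).const_mul C).mono'
      hmeas.aestronglyMeasurable ?_
    filter_upwards [ae_restrict_mem measurableSet_Ioi] with α hα
    exact (hnorm α (one_pos.trans hα)).trans_le (hC α (one_pos.trans hα))
  simpa only [Ioo_union_Ici_eq_Ioi one_pos] using hnear.union hfar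

end LognormalPdf

/-- `L = lnMoment μ σ 0`, and `-L' = lnMoment μ σ 1` on `(0, ∞)`. -/
noncomputable def lnMoment (μ σ : ℝ) (k : ℕ) (x : ℝ) : ℝ :=
  ∫ α in Ioi 0, α ^ k * rexp (-α * x) * lognormalPdf μ σ α

section LnMoment

variable {μ σ : ℝ}

lemma integrableOn_lnMoment (hσ : 0 < σ) (k : ℕ) {x : ℝ} (hx : 0 ≤ x) :
    IntegrableOn (fun α => α ^ k * rexp (-α * x) * lognormalPdf μ σ α) (Ioi 0) := by
  refine (integrableOn_pow_mul_lognormalPdf (μ := μ) hσ k).mono'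
    (by fun_prop : Measurable _).aestronglyMeasurable ?_
  filter_upwards [ae_restrict_mem measurableSet_Ioi] with α (hα : 0 < α)
  have hpdf := lognormalPdf_pos (μ := μ) hσ hα
  have hexp : rexp (-α * x) ≤ 1 := Real.exp_le_one_iff.2 (by nlinarith)
  rw [Real.norm_of_nonneg (by positivity), mul_right_comm]
  exact mul_le_of_le_one_right (by positivity) hexp

lemma lnMoment_integrand_nonneg (hσ : 0 < σ) (k : ℕ) (x : ℝ) :
    0 ≤ᵐ[volume.restrict (Ioi 0)] fun α => α ^ k * rexp (-α * x) * lognormalPdf μ σ α := by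
  filter_upwards [ae_restrict_mem measurableSet_Ioi] with α (hα : 0 < α)
  have := lognormalPdf_pos (μ := μ) hσ hα
  positivity

lemma lnMoment_nonneg (hσ : 0 < σ) (k : ℕ) (x : ℝ) : 0 ≤ lnMoment μ σ k x :=
  integral_nonneg_of_ae (lnMoment_integrand_nonneg hσ k x)

lemma lnMoment_pos (hσ : 0 < σ) (k : ℕ) {x : ℝ} (hx : 0 ≤ x) : 0 < lnMoment μ σ k x :=
  setIntegral_pos_of_pos measurableSet_Ioi (by simp) (integrableOn_lnMoment hσ k hx)
    fun α (hα : 0 < α) => by have := lognormalPdf_pos (μ := μ) hσ hα; positivity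

lemma lnLaplace_eq_lnMoment_zero : lnLaplace μ σ = lnMoment μ σ 0 := by
  ext x
  simp only [lnLaplace, lnMoment, pow_zero, one_mul]

lemma hasDerivAt_lnLaplace (hσ : 0 < σ) {x : ℝ} (hx : 0 < x) :
    HasDerivAt (lnLaplace μ σ) (-lnMoment μ σ 1 x) x := by
  have h := hasDerivAt_integral_of_dominated_loc_of_deriv_le
    (F := fun y α => rexp (-α * y) * lognormalPdf μ σ α)
    (F' := fun y α => -(α * rexp (-α * y) * lognormalPdf μ σ α))
    (bound := fun α => α * lognormalPdf μ σ α) (μ := volume.restrict (Ioi 0))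
    (Ioi_mem_nhds hx)
    (Eventually.of_forall fun y => (by fun_prop : Measurable _).aestronglyMeasurable)
    (by simpa only [pow_zero, one_mul] using (integrableOn_lnMoment (μ := μ) hσ 0 hx.le).integrable)
    (by fun_prop : Measurable _).aestronglyMeasurable
    ?bound
    (by simpa only [pow_one] using (integrableOn_pow_mul_lognormalPdf (μ := μ) hσ 1).integrable)
    (Eventually.of_forall fun α y _ =>
      ((((hasDerivAt_id' y).const_mul (-α)).exp.mul_const (lognormalPdf μ σ α)).congr_deriv
        (by ring)))
  case bound =>
    filter_upwards [ae_restrict_mem measurableSet_Ioi] with α (hα : 0 < α) y (hy : 0 < y)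
    have hpdf := lognormalPdf_pos (μ := μ) hσ hα
    have hexp : rexp (-α * y) ≤ 1 := Real.exp_le_one_iff.2 (by nlinarith)
    rw [norm_neg, Real.norm_of_nonneg (by positivity), mul_right_comm]
    exact mul_le_of_le_one_right (by positivity) hexp
  rw [lnMoment, ← integral_neg]
  simp only [pow_one]
  exact h.2

end LnMoment

section Tail

variable {μ σ : ℝ}

lemma lognormalPdf_add (t α : ℝ) :
    lognormalPdf (μ + t) σ α =
      rexp (t * (2 * (Real.log α - μ) - t) / (2 * σ ^ 2)) * lognormalPdf μ σ α := by
  unfold lognormalPdf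
  rw [mul_left_comm, ← Real.exp_add]
  congr 2
  ring

lemma exists_lognormalPdf_add_le (hσ : 0 < σ) {t ε : ℝ} (ht : 0 < t) (hε : 0 < ε) :
    ∃ δ₀ > 0, ∀ α, 0 < α → α ≤ δ₀ → lognormalPdf (μ + t) σ α ≤ ε * lognormalPdf μ σ α := by
  refine ⟨rexp (μ + t / 2 + σ ^ 2 / t * Real.log ε), Real.exp_pos _, fun α hα hαδ => ?_⟩
  have hlog : Real.log α ≤ μ + t / 2 + σ ^ 2 / t * Real.log ε := by
    simpa using Real.log_le_log hα hαδ
  have hexponent : t * (2 * (Real.log α - μ) - t) / (2 * σ ^ 2) ≤ Real.log ε := by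
    have hσt : t * (2 * (σ ^ 2 / t * Real.log ε)) = Real.log ε * (2 * σ ^ 2) := by
      field_simp
    rw [div_le_iff₀ (by positivity), ← hσt]
    exact mul_le_mul_of_nonneg_left (by linarith) ht.le
  rw [lognormalPdf_add, ← Real.exp_log hε]
  exact mul_le_mul_of_nonneg_right (Real.exp_le_exp.2 hexponent) (lognormalPdf_pos hσ hα).le

lemma exists_mul_exp_le_lnMoment (hσ : 0 < σ) (k : ℕ) {ε : ℝ} (hε : 0 < ε) :
    ∃ c > 0, ∀ x, 0 ≤ x → c * rexp (-ε * x) ≤ lnMoment μ σ k x := by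
  have hint : IntegrableOn (fun α => α ^ k * lognormalPdf μ σ α) (Ioc 0 ε) :=
    (integrableOn_pow_mul_lognormalPdf hσ k).mono_set Ioc_subset_Ioi_self
  refine ⟨∫ α in Ioc 0 ε, α ^ k * lognormalPdf μ σ α,
    setIntegral_pos_of_pos measurableSet_Ioc (by simpa using hε) hint fun α hα =>
      mul_pos (pow_pos hα.1 k) (lognormalPdf_pos hσ hα.1), fun x hx => ?_⟩
  calc (∫ α in Ioc 0 ε, α ^ k * lognormalPdf μ σ α) * rexp (-ε * x)
      = ∫ α in Ioc 0 ε, α ^ k * lognormalPdf μ σ α * rexp (-ε * x) :=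
        (integral_mul_const _ _).symm
    _ ≤ ∫ α in Ioc 0 ε, α ^ k * rexp (-α * x) * lognormalPdf μ σ α := by
        refine setIntegral_mono_on (hint.mul_const _)
          ((integrableOn_lnMoment hσ k hx).mono_set Ioc_subset_Ioi_self)
          measurableSet_Ioc fun α hα => ?_
        have := lognormalPdf_pos (μ := μ) hσ hα.1
        have := pow_pos hα.1 k
        rw [mul_right_comm]
        gcongr
        nlinarith [hα.2]
    _ ≤ lnMoment μ σ k x :=
        setIntegral_mono_set (integrableOn_lnMoment hσ k hx) (lnMoment_integrand_nonneg hσ k x)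
          Ioc_subset_Ioi_self.eventuallyLE

lemma lnMoment_le_of_lognormalPdf_le (hσ : 0 < σ) (k : ℕ) {ν ε δ₀ x : ℝ} (hε : 0 ≤ ε)
    (hx : 0 ≤ x) (hδ₀ : ∀ α, 0 < α → α ≤ δ₀ → lognormalPdf ν σ α ≤ ε * lognormalPdf μ σ α) :
    lnMoment ν σ k x ≤
      ε * lnMoment μ σ k x + rexp (-δ₀ * x) * ∫ α in Ioi 0, α ^ k * lognormalPdf ν σ α := by
  have hint := integrableOn_lnMoment (μ := μ) hσ k hx
  have hint' := integrableOn_pow_mul_lognormalPdf (μ := ν) hσ k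
  rw [lnMoment, lnMoment, ← integral_const_mul, ← integral_const_mul,
    ← integral_add (hint.const_mul ε) (hint'.const_mul _)]
  refine setIntegral_mono_on (integrableOn_lnMoment hσ k hx)
    ((hint.const_mul ε).add (hint'.const_mul _)) measurableSet_Ioi fun α (hα : 0 < α) => ?_
  have := lognormalPdf_pos (μ := μ) hσ hα
  have := lognormalPdf_pos (μ := ν) hσ hα
  have := pow_pos hα k
  rcases le_or_gt α δ₀ with hαδ | hδα
  · have : α ^ k * rexp (-α * x) * lognormalPdf ν σ α ≤
        ε * (α ^ k * rexp (-α * x) * lognormalPdf μ σ α) := by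
      rw [mul_left_comm ε]
      gcongr
      exact hδ₀ α hα hαδ
    have : 0 ≤ rexp (-δ₀ * x) * (α ^ k * lognormalPdf ν σ α) := by positivity
    linarith
  · have : α ^ k * rexp (-α * x) * lognormalPdf ν σ α ≤
        rexp (-δ₀ * x) * (α ^ k * lognormalPdf ν σ α) := by
      rw [mul_left_comm, ← mul_assoc]
      gcongr
    have : 0 ≤ ε * (α ^ k * rexp (-α * x) * lognormalPdf μ σ α) := by positivity
    linarith

lemma tendsto_lnMoment_add_div (hσ : 0 < σ) (k : ℕ) {t : ℝ} (ht : 0 < t) :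
    Tendsto (fun x => lnMoment (μ + t) σ k x / lnMoment μ σ k x) atTop (𝓝 0) := by
  refine tendsto_order.2 ⟨fun a ha => (eventually_ge_atTop 0).mono fun x _ =>
    ha.trans_le (div_nonneg (lnMoment_nonneg hσ k x) (lnMoment_nonneg hσ k x)), fun ε hε => ?_⟩
  obtain ⟨δ₀, hδ₀, hpdf⟩ := exists_lognormalPdf_add_le (μ := μ) hσ ht (half_pos hε)
  obtain ⟨c, hc, hlow⟩ := exists_mul_exp_le_lnMoment (μ := μ) hσ k (half_pos hδ₀)
  set K := ∫ α in Ioi 0, α ^ k * lognormalPdf (μ + t) σ α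
  have hK : 0 ≤ K := setIntegral_nonneg measurableSet_Ioi fun α (hα : 0 < α) =>
    mul_nonneg (pow_pos hα k).le (lognormalPdf_pos hσ hα).le
  -- As `L_k(x) ≥ c e^{-δ₀x/2}`, the tail term `e^{-δ₀x} K` is at most `(K/c) e^{-δ₀x/2} L_k(x)`.
  have htail : Tendsto (fun x => ε / 2 + K / c * rexp (-(δ₀ / 2) * x)) atTop (𝓝 (ε / 2)) := by
    have hexp := Real.tendsto_exp_atBot.comp
      (tendsto_id.const_mul_atTop_of_neg (by linarith : -(δ₀ / 2) < 0))
    simpa using (hexp.const_mul (K / c)).const_add (ε / 2)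
  filter_upwards [htail.eventually (gt_mem_nhds (half_lt_self hε)), eventually_ge_atTop 0]
    with x hsmall hx
  have hm := lnMoment_pos (μ := μ) hσ k hx
  have hexp : rexp (-δ₀ * x) * K ≤ K / c * rexp (-(δ₀ / 2) * x) * lnMoment μ σ k x := by
    calc rexp (-δ₀ * x) * K = K / c * rexp (-(δ₀ / 2) * x) * (c * rexp (-(δ₀ / 2) * x)) := by
          rw [show -δ₀ * x = -(δ₀ / 2) * x + -(δ₀ / 2) * x by ring, Real.exp_add]
          field_simp
      _ ≤ K / c * rexp (-(δ₀ / 2) * x) * lnMoment μ σ k x := by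
          gcongr
          exact hlow x hx
  rw [div_lt_iff₀ hm]
  calc lnMoment (μ + t) σ k x
      ≤ ε / 2 * lnMoment μ σ k x + rexp (-δ₀ * x) * K :=
        lnMoment_le_of_lognormalPdf_le hσ k (half_pos hε).le hx hpdf
    _ < ε * lnMoment μ σ k x := by nlinarith

lemma lognormalPdf_div {c α : ℝ} (hc : c ≠ 0) (hα : α ≠ 0) :
    c⁻¹ * lognormalPdf μ σ (α / c) = lognormalPdf (μ + Real.log c) σ α := by
  unfold lognormalPdf
  rw [Real.log_div hα hc, sub_sub, add_comm (Real.log c)]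
  field_simp

lemma lnMoment_mul (k : ℕ) {c : ℝ} (hc : 0 < c) (x : ℝ) :
    lnMoment μ σ k (c * x) = (c ^ k)⁻¹ * lnMoment (μ + Real.log c) σ k x := by
  have hsub := integral_comp_mul_left_Ioi
    (fun β => (β / c) ^ k * rexp (-β * x) * lognormalPdf μ σ (β / c)) 0 hc
  rw [mul_zero, smul_eq_mul] at hsub
  rw [lnMoment, lnMoment, ← integral_const_mul]
  calc ∫ α in Ioi 0, α ^ k * rexp (-α * (c * x)) * lognormalPdf μ σ α
      = ∫ α in Ioi 0, (c * α / c) ^ k * rexp (-(c * α) * x) * lognormalPdf μ σ (c * α / c) := by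
        congr 1 with α
        rw [mul_div_cancel_left₀ α hc.ne']
        ring_nf
    _ = c⁻¹ * ∫ β in Ioi 0, (β / c) ^ k * rexp (-β * x) * lognormalPdf μ σ (β / c) := hsub
    _ = _ := by
        rw [← integral_const_mul]
        refine setIntegral_congr_fun measurableSet_Ioi fun β (hβ : 0 < β) => ?_
        rw [← lognormalPdf_div hc.ne' hβ.ne', div_pow]
        ring

lemma isLittleO_lnMoment_mul (hσ : 0 < σ) (k : ℕ) {c : ℝ} (hc : 1 < c) :
    (fun x => lnMoment μ σ k (c * x)) =o[atTop] lnMoment μ σ k := by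
  refine (isLittleO_iff_tendsto' ((eventually_ge_atTop 0).mono fun x hx h =>
    absurd h (lnMoment_pos hσ k hx).ne')).2 ?_
  simpa only [lnMoment_mul k (one_pos.trans hc), mul_div_assoc, mul_zero] using
    (tendsto_lnMoment_add_div hσ k (Real.log_pos hc)).const_mul (c ^ k)⁻¹

end Tail

section LogitShare

variable {J : ℕ} (δ : Fin J → ℝ) (j : Fin J)

/-- `y` approximates from below the leading term `E = e^{δ_j - α q_j}` of the logit share of `j`
as `α → ∞`, with error at most `2 E ∑_l e^{δ_l - α q_l}`. -/
def LogitLeadingApprox (q : Fin J → ℝ) (α y : ℝ) : Prop :=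
  0 ≤ y ∧ y ≤ rexp (δ j - α * q j) ∧
    rexp (δ j - α * q j) * (1 - 2 * ∑ l, rexp (δ l - α * q l)) ≤ y

variable (q : Fin J → ℝ) (α : ℝ)

lemma logitShare_pos : 0 < logitShare δ j q α := by
  unfold logitShare; positivity

lemma logitShare_le_exp : logitShare δ j q α ≤ rexp (δ j - α * q j) :=
  div_le_self (Real.exp_pos _).le (le_add_of_nonneg_right (by positivity))

lemma exp_le_sum_exp : rexp (δ j - α * q j) ≤ ∑ l, rexp (δ l - α * q l) :=
  Finset.single_le_sum (f := fun l => rexp (δ l - α * q l)) (fun _ _ => (Real.exp_pos _).le)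
    (Finset.mem_univ j)

lemma logitShare_lt_one : logitShare δ j q α < 1 := by
  rw [logitShare, div_lt_one (by positivity)]
  linarith [exp_le_sum_exp δ j q α]

lemma exp_mul_one_sub_sum_le_logitShare :
    rexp (δ j - α * q j) * (1 - ∑ l, rexp (δ l - α * q l)) ≤ logitShare δ j q α := by
  rw [logitShare, le_div_iff₀ (by positivity)]
  have := Real.exp_pos (δ j - α * q j)
  nlinarith [mul_nonneg this.le (sq_nonneg (∑ l, rexp (δ l - α * q l)))]

lemma logitLeadingApprox_logitShare : LogitLeadingApprox δ j q α (logitShare δ j q α) := by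
  have := exp_mul_one_sub_sum_le_logitShare δ j q α
  have : 0 ≤ rexp (δ j - α * q j) * ∑ l, rexp (δ l - α * q l) := by positivity
  exact ⟨(logitShare_pos δ j q α).le, logitShare_le_exp δ j q α, by linarith⟩

lemma logitLeadingApprox_logitShare_mul_one_sub :
    LogitLeadingApprox δ j q α (logitShare δ j q α * (1 - logitShare δ j q α)) := by
  have hpos := logitShare_pos δ j q α
  have hle := logitShare_le_exp δ j q α
  have hlt := logitShare_lt_one δ j q α
  -- `s² ≤ E² ≤ E S`, so `s (1 - s) ≥ E (1 - S) - E S`.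
  have hsq : logitShare δ j q α * logitShare δ j q α ≤
      rexp (δ j - α * q j) * ∑ l, rexp (δ l - α * q l) :=
    mul_le_mul hle (hle.trans (exp_le_sum_exp δ j q α)) hpos.le (Real.exp_pos _).le
  refine ⟨mul_nonneg hpos.le (by linarith), ?_, ?_⟩
  · nlinarith
  · nlinarith [exp_mul_one_sub_sum_le_logitShare δ j q α]

@[fun_prop]
lemma measurable_logitShare : Measurable (logitShare δ j q) := by
  unfold logitShare; fun_prop

lemma hasDerivAt_logitShare_update (t : ℝ) :
    HasDerivAt (fun s => logitShare δ j (Function.update q j s) α)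
      (-α * logitShare δ j (Function.update q j t) α *
        (1 - logitShare δ j (Function.update q j t) α)) t := by
  classical
  set S₀ := ∑ l ∈ Finset.univ.erase j, rexp (δ l - α * q l)
  have hsum : ∀ s, ∑ l, rexp (δ l - α * Function.update q j s l) = rexp (δ j - α * s) + S₀ := by
    intro s
    rw [← Finset.add_sum_erase _ _ (Finset.mem_univ j), Function.update_self]
    congr 1
    exact Finset.sum_congr rfl fun l hl => by rw [Function.update_of_ne (Finset.ne_of_mem_erase hl)]
  have hshare : ∀ s, logitShare δ j (Function.update q j s) α =
      rexp (δ j - α * s) / (1 + (rexp (δ j - α * s) + S₀)) := fun s => by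
    rw [logitShare, hsum, Function.update_self]
  have hnum : HasDerivAt (fun s => rexp (δ j - α * s)) (rexp (δ j - α * t) * -α) t := by
    simpa using ((hasDerivAt_id t).const_mul α).const_sub (δ j) |>.exp
  have hden : 0 < 1 + (rexp (δ j - α * t) + S₀) := by positivity
  simp only [hshare]
  refine (hnum.div ((hnum.add_const S₀).const_add 1) hden.ne').congr_deriv ?_
  field_simp
  ring

end LogitShare

section Demand

variable {μ σ : ℝ} {J : ℕ} (δ : Fin J → ℝ) (j : Fin J)

lemma abs_integral_sub_lnMoment_le (hσ : 0 < σ) (k : ℕ) {q : Fin J → ℝ} (hq : ∀ i, 0 < q i)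
    {g : ℝ → ℝ} (hg : Measurable g) (hgq : ∀ α, LogitLeadingApprox δ j q α (g α)) :
    |(∫ α in Ioi 0, α ^ k * g α * lognormalPdf μ σ α) - rexp (δ j) * lnMoment μ σ k (q j)| ≤
      2 * ∑ l, rexp (δ j + δ l) * lnMoment μ σ k (q j + q l) := by
  have hintj := (integrableOn_lnMoment (μ := μ) hσ k (hq j).le).const_mul (rexp (δ j))
  have hint : ∀ l, IntegrableOn (fun α => rexp (δ j + δ l) *
      (α ^ k * rexp (-α * (q j + q l)) * lognormalPdf μ σ α)) (Ioi 0) := fun l =>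
    (integrableOn_lnMoment hσ k (add_pos (hq j) (hq l)).le).const_mul _
  have hlead : ∀ α, rexp (δ j) * (α ^ k * rexp (-α * q j) * lognormalPdf μ σ α) =
      α ^ k * lognormalPdf μ σ α * rexp (δ j - α * q j) := fun α => by
    rw [sub_eq_add_neg, Real.exp_add, ← neg_mul]
    ring
  have herr : ∀ α, 2 * ∑ l, rexp (δ j + δ l) *
      (α ^ k * rexp (-α * (q j + q l)) * lognormalPdf μ σ α) =
      α ^ k * lognormalPdf μ σ α *
        (2 * rexp (δ j - α * q j) * ∑ l, rexp (δ l - α * q l)) := fun α => by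
    simp only [Finset.mul_sum]
    congr 1 with l
    have hexp : rexp (δ j + δ l) * rexp (-α * (q j + q l)) =
        rexp (δ j - α * q j) * rexp (δ l - α * q l) := by
      rw [← Real.exp_add, ← Real.exp_add]
      ring_nf
    linear_combination (2 * α ^ k * lognormalPdf μ σ α) * hexp
  have hintg : IntegrableOn (fun α => α ^ k * g α * lognormalPdf μ σ α) (Ioi 0) := by
    refine hintj.mono' (by fun_prop : Measurable _).aestronglyMeasurable ?_
    filter_upwards [ae_restrict_mem measurableSet_Ioi] with α (hα : 0 < α)
    have := lognormalPdf_pos (μ := μ) hσ hα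
    obtain ⟨hg0, hgE, -⟩ := hgq α
    rw [Real.norm_of_nonneg (by positivity), hlead, mul_right_comm]
    gcongr
  rw [lnMoment, ← integral_const_mul, ← integral_sub hintg hintj, ← Real.norm_eq_abs]
  calc ‖∫ α in Ioi 0, α ^ k * g α * lognormalPdf μ σ α -
          rexp (δ j) * (α ^ k * rexp (-α * q j) * lognormalPdf μ σ α)‖
      ≤ ∫ α in Ioi 0, 2 * ∑ l, rexp (δ j + δ l) *
          (α ^ k * rexp (-α * (q j + q l)) * lognormalPdf μ σ α) := by
        refine norm_integral_le_of_norm_le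
          ((integrable_finsetSum _ fun l _ => hint l).const_mul 2) ?_
        filter_upwards [ae_restrict_mem measurableSet_Ioi] with α (hα : 0 < α)
        have := lognormalPdf_pos (μ := μ) hσ hα
        obtain ⟨-, hgE, hEg⟩ := hgq α
        rw [hlead, herr, mul_right_comm _ (g α), ← mul_sub, norm_mul,
          Real.norm_of_nonneg (by positivity),
          Real.norm_eq_abs, abs_sub_comm, abs_of_nonneg (by linarith)]
        gcongr
        linarith
    _ = 2 * ∑ l, rexp (δ j + δ l) * lnMoment μ σ k (q j + q l) := by
        rw [integral_const_mul, integral_finsetSum _ fun l _ => hint l]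
        simp only [integral_const_mul, lnMoment]

lemma isEquivalent_integral_lnMoment_ray (hσ : 0 < σ) (k : ℕ) {p : Fin J → ℝ}
    (hp : ∀ i, 0 < p i) {g : (Fin J → ℝ) → ℝ → ℝ} (hg : ∀ q, Measurable (g q))
    (hgq : ∀ q α, LogitLeadingApprox δ j q α (g q α)) :
    (fun l : ℝ => ∫ α in Ioi 0, α ^ k * g (l • p) α * lognormalPdf μ σ α) ~[atTop]
      fun l => rexp (δ j) * lnMoment μ σ k (l * p j) := by
  have hray : Tendsto (fun l : ℝ => l * p j) atTop atTop := tendsto_id.atTop_mul_const (hp j)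
  have herr : (fun l : ℝ => 2 * ∑ i, rexp (δ j + δ i) * lnMoment μ σ k (l * p j + l * p i))
      =o[atTop] fun l => rexp (δ j) * lnMoment μ σ k (l * p j) := by
    refine (IsLittleO.fun_sum fun i _ => ?_).const_mul_left 2
    have hc : 1 < (p j + p i) / p j := by
      rw [one_lt_div (hp j)]
      linarith [hp i]
    refine (((isLittleO_lnMoment_mul hσ k hc).comp_tendsto hray).congr_left fun l => ?_
      ).const_mul_left _ |>.const_mul_right (Real.exp_pos _).ne'
    simp only [Function.comp]
    congr 1
    field_simp [(hp j).ne']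
  refine IsBigO.trans_isLittleO (IsBigO.of_bound 1 ?_) herr
  filter_upwards [eventually_gt_atTop 0] with l hl
  rw [one_mul, Real.norm_eq_abs, Real.norm_eq_abs]
  have := abs_integral_sub_lnMoment_le δ j hσ k (q := l • p) (μ := μ)
    (fun i => by simpa using mul_pos hl (hp i)) (hg _) (hgq _)
  simp only [Pi.smul_apply, smul_eq_mul] at this
  exact this.trans (le_abs_self _)

lemma hasDerivAt_qLN_update (hσ : 0 < σ) (M : ℝ) (q : Fin J → ℝ) (t : ℝ) :
    HasDerivAt (fun s => qLN δ M μ σ j (Function.update q j s))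
      (-(M * ∫ α in Ioi 0, α * (logitShare δ j (Function.update q j t) α *
        (1 - logitShare δ j (Function.update q j t) α)) * lognormalPdf μ σ α)) t := by
  have hpdf := integrableOn_pow_mul_lognormalPdf (μ := μ) hσ 0
  have hmom := integrableOn_pow_mul_lognormalPdf (μ := μ) hσ 1
  simp only [pow_zero, one_mul, pow_one] at hpdf hmom
  -- `0 < s < 1` bounds the integrand by `f` and its `t`-derivative by `α f`, uniformly in `t`.
  have h := hasDerivAt_integral_of_dominated_loc_of_deriv_le
    (F := fun s α => logitShare δ j (Function.update q j s) α * lognormalPdf μ σ α)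
    (F' := fun s α => -α * logitShare δ j (Function.update q j s) α *
      (1 - logitShare δ j (Function.update q j s) α) * lognormalPdf μ σ α)
    (bound := fun α => α * lognormalPdf μ σ α) (μ := volume.restrict (Ioi 0))
    (x₀ := t) Filter.univ_mem
    (Eventually.of_forall fun s => (by fun_prop : Measurable _).aestronglyMeasurable)
    (hpdf.mono' (by fun_prop : Measurable _).aestronglyMeasurable ?integrable)
    (by fun_prop : Measurable _).aestronglyMeasurable ?bound hmom.integrable
    (Eventually.of_forall fun α s _ =>
      (hasDerivAt_logitShare_update δ j q α s).mul_const (lognormalPdf μ σ α))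
  case integrable =>
    filter_upwards [ae_restrict_mem measurableSet_Ioi] with α (hα : 0 < α)
    have hpdf := lognormalPdf_pos (μ := μ) hσ hα
    have := logitShare_pos δ j (Function.update q j t) α
    rw [Real.norm_of_nonneg (by positivity)]
    exact mul_le_of_le_one_left hpdf.le (logitShare_lt_one δ j _ α).le
  case bound =>
    filter_upwards [ae_restrict_mem measurableSet_Ioi] with α (hα : 0 < α) s _
    have := lognormalPdf_pos (μ := μ) hσ hα
    set y := logitShare δ j (Function.update q j s) α
    have hy := logitShare_pos δ j (Function.update q j s) α
    have hy1 := logitShare_lt_one δ j (Function.update q j s) α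
    rw [show -α * y * (1 - y) * lognormalPdf μ σ α = -(y * (1 - y)) * (α * lognormalPdf μ σ α) by
      ring, norm_mul, norm_neg, Real.norm_of_nonneg (by nlinarith),
      Real.norm_of_nonneg (by positivity)]
    exact mul_le_of_le_one_left (by positivity) (by nlinarith)
  refine (h.2.const_mul M).congr_deriv ?_
  rw [← mul_neg, ← integral_neg]
  congr 2 with α
  ring

lemma pd_qLN (hσ : 0 < σ) (M : ℝ) (q : Fin J → ℝ) :
    pd (qLN δ M μ σ j) j q = -(M * ∫ α in Ioi 0,
      α * (logitShare δ j q α * (1 - logitShare δ j q α)) * lognormalPdf μ σ α) := by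
  rw [pd]
  simpa only [Function.update_eq_self] using (hasDerivAt_qLN_update δ j hσ M q (q j)).deriv

end Demand

theorem etaLN_own_ray_asymptotics_general {J : ℕ} (M : ℝ) (hM : 0 < M)
    (δ : Fin J → ℝ) (μ σ : ℝ) (hσ : 0 < σ) (j : Fin J)
    (p : Fin J → ℝ) (hp : ∀ i, 0 < p i) :
    Tendsto (fun l : ℝ =>
        (pd (qLN δ M μ σ j) j (l • p) / qLN δ M μ σ j (l • p)) ^ 2 /
          (-(deriv (lnLaplace μ σ) (l * p j)) / lnLaplace μ σ (l * p j)) ^ 2)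
      atTop (nhds 1) := by
  have hq : (fun l : ℝ => ∫ α in Ioi 0, logitShare δ j (l • p) α * lognormalPdf μ σ α)
      ~[atTop] fun l => rexp (δ j) * lnMoment μ σ 0 (l * p j) := by
    simpa only [pow_zero, one_mul] using isEquivalent_integral_lnMoment_ray δ j hσ 0 hp
      (measurable_logitShare δ j) (logitLeadingApprox_logitShare δ j)
  have hdq : (fun l : ℝ => ∫ α in Ioi 0, α * (logitShare δ j (l • p) α *
      (1 - logitShare δ j (l • p) α)) * lognormalPdf μ σ α)
      ~[atTop] fun l => rexp (δ j) * lnMoment μ σ 1 (l * p j) := by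
    simpa only [pow_one] using isEquivalent_integral_lnMoment_ray δ j hσ 1 hp
      (fun q => by fun_prop) (logitLeadingApprox_logitShare_mul_one_sub δ j)
  have hpos : ∀ᶠ l : ℝ in atTop, 0 < l * p j :=
    (eventually_gt_atTop 0).mono fun l hl => mul_pos hl (hp j)
  have hratio := ((hdq.div hq).pow 2).congr_right
    (w := fun l => (lnMoment μ σ 1 (l * p j) / lnMoment μ σ 0 (l * p j)) ^ 2)
    (Eventually.of_forall fun l => by
      simp only [Pi.div_apply, Pi.pow_apply, mul_div_mul_left _ _ (Real.exp_pos (δ j)).ne'])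
  rw [isEquivalent_iff_tendsto_one (hpos.mono fun l hl => by
    have := lnMoment_pos (μ := μ) hσ 0 hl.le
    have := lnMoment_pos (μ := μ) hσ 1 hl.le
    positivity)] at hratio
  refine hratio.congr' (hpos.mono fun l hl => ?_)
  simp only [Pi.div_apply, Pi.pow_apply]
  rw [pd_qLN δ j hσ, qLN, (hasDerivAt_lnLaplace hσ hl).deriv, lnLaplace_eq_lnMoment_zero, neg_neg,
    neg_div, neg_sq, mul_div_mul_left _ _ hM.ne']

/-- Along any ray `p ∈ ℝ_{++}^J`, `η_{jj}(λp)² / m(λ p_j)² → 1` as `λ → ∞`,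
where `η_{jj}(p) = ∂_{p_j} q_j(p)/q_j(p)` and `m(x) = −L'(x)/L(x)`. -/
theorem etaLN_own_ray_asymptotics {J : ℕ} (hJ : 1 ≤ J) (M : ℝ) (hM : 0 < M)
    (δ : Fin J → ℝ) (μ σ : ℝ) (hσ : 0 < σ) (j : Fin J)
    (p : Fin J → ℝ) (hp : ∀ i, 0 < p i) :
    Tendsto (fun l : ℝ =>
        (pd (qLN δ M μ σ j) j (l • p) / qLN δ M μ σ j (l • p)) ^ 2 /
          (-(deriv (lnLaplace μ σ) (l * p j)) / lnLaplace μ σ (l * p j)) ^ 2)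
      atTop (nhds 1) :=
  etaLN_own_ray_asymptotics_general M hM δ μ σ hσ j p hp
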